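/- There exists n₀ such that for all n ≥ n₀ the complete 9-partite graph T(9n,9) with nine parts of size n is a forbidden subgraph for box graphs: for every generic finite set Y ⊂ ℝ³ and every choice of pairwise disjoint subsets S₁, …, S₉ ⊆ Y each of size n, there are indices i ≠ j and points p ∈ Sᵢ, q ∈ Sⱼ that do not span an empty box. -/

import Mathlib

open scoped Classical

/-- A finite set in ℝ³ is generic if no two distinct points agree in any coordinate. -/
def Generic3 (Y : Finset (Fin 3 → ℝ)) : Prop :=
  ∀ p ∈ Y, ∀ q ∈ Y, p ≠ q → ∀ i, p i ≠ q i

/-- `p` and `q` span an empty box w.r.t. `Y`: no point of `Y` lies in the open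
interior of the axis-aligned box spanned by `p` and `q`. -/
def SpansEmptyBox (Y : Finset (Fin 3 → ℝ)) (p q : Fin 3 → ℝ) : Prop :=
  ∀ z ∈ Y, ¬ (∀ i, min (p i) (q i) < z i ∧ z i < max (p i) (q i))

/-- Number of edges of the box graph `G_b(Y)`: the number of 2-element subsets of `Y`
whose two points span an empty box. -/
noncomputable def boxEdgeCount (Y : Finset (Fin 3 → ℝ)) : ℕ :=
  ((Y.powersetCard 2).filter
    (fun A => ∀ p ∈ A, ∀ q ∈ A, p ≠ q → SpansEmptyBox Y p q)).card



/-- Two finite point sets are separated in coordinate `c`. -/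
def CSep (c : Fin 3) (X Z : Finset (Fin 3 → ℝ)) : Prop :=
  (∀ x ∈ X, ∀ z ∈ Z, x c < z c) ∨ (∀ x ∈ X, ∀ z ∈ Z, z c < x c)

lemma CSep.mono {c : Fin 3} {X Z X' Z' : Finset (Fin 3 → ℝ)}
    (hX : X' ⊆ X) (hZ : Z' ⊆ Z) (h : CSep c X Z) : CSep c X' Z' := by
  rcases h with h | h
  · exact Or.inl fun x hx z hz => h x (hX hx) z (hZ hz)
  · exact Or.inr fun x hx z hz => h x (hX hx) z (hZ hz)

/-- value of the largest `c`-coordinate in a finite set -/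
noncomputable def maxC (c : Fin 3) (B : Finset (Fin 3 → ℝ)) : ℝ :=
  WithBot.unbotD 0 ((B.image (fun x => x c)).max)

lemma maxC_le {c : Fin 3} {B : Finset (Fin 3 → ℝ)} (hB : B.Nonempty) :
    (∀ y ∈ B, y c ≤ maxC c B) ∧ (∃ x ∈ B, x c = maxC c B) := by
  have hV : (B.image (fun x => x c)).Nonempty := hB.image _
  have hcoe : (B.image (fun x => x c)).max = ((B.image (fun x => x c)).max' hV : ℝ) :=
    (Finset.coe_max' hV).symm
  have hval : maxC c B = (B.image (fun x => x c)).max' hV := by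
    rw [maxC, hcoe]; rfl
  constructor
  · intro y hy
    rw [hval]
    exact Finset.le_max' (B.image (fun x => x c)) (y c) (Finset.mem_image_of_mem _ hy)
  · have := Finset.max'_mem (B.image (fun x => x c)) hV
    rw [Finset.mem_image] at this
    obtain ⟨x, hx, hxe⟩ := this
    exact ⟨x, hx, by rw [hval, hxe]⟩

noncomputable def fmin (V : Finset ℝ) : ℝ := if h : V.Nonempty then V.min' h else 0

lemma fmin_spec {V : Finset ℝ} (h : V.Nonempty) : fmin V ∈ V ∧ ∀ v ∈ V, fmin V ≤ v := by
  have hval : fmin V = V.min' h := by rw [fmin, dif_pos h]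
  rw [hval]
  exact ⟨Finset.min'_mem _ _, fun v hv => Finset.min'_le _ _ hv⟩

/-- Greedy separation of a family of point sets in a single coordinate. -/
lemma sepc (c : Fin 3) (s : ℕ) (hs : 1 ≤ s) :
    ∀ (n : ℕ) (I : Finset (Fin 9)) (A : Fin 9 → Finset (Fin 3 → ℝ)),
    I.card = n →
    (∀ i ∈ I, s * n ≤ (A i).card) →
    (∀ i ∈ I, ∀ j ∈ I, i ≠ j → ∀ x ∈ A i, ∀ y ∈ A j, x c ≠ y c) →
    ∃ B : Fin 9 → Finset (Fin 3 → ℝ),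
      (∀ i ∈ I, B i ⊆ A i ∧ (B i).card = s) ∧
      (∀ i ∈ I, ∀ j ∈ I, i ≠ j → CSep c (B i) (B j)) := by
  intro n
  induction n with
  | zero =>
      intro I A hI _ _
      refine ⟨fun _ => ∅, ?_, ?_⟩
      · intro i hi
        rw [Finset.card_eq_zero] at hI
        simp [hI] at hi
      · intro i hi
        rw [Finset.card_eq_zero] at hI
        simp [hI] at hi
  | succ n ih =>
      intro I A hI hcard hval
      have hIne : I.Nonempty := Finset.card_pos.mp (by omega)
      -- each part admits blocks of size s
      have hsA : ∀ i ∈ I, s ≤ (A i).card := by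
        intro i hi
        have := hcard i hi
        have hle : s ≤ s * (n+1) := Nat.le_mul_of_pos_right s (Nat.succ_pos n)
        omega
      have hPne : ∀ i ∈ I, ((A i).powersetCard s).Nonempty := by
        intro i hi
        exact Finset.powersetCard_nonempty.mpr (hsA i hi)
      -- t i = minimal possible max-c-value of an s-subset of A i
      set t : Fin 9 → ℝ := fun i => fmin (((A i).powersetCard s).image (maxC c)) with ht
      have htspec : ∀ i ∈ I, ∃ B ∈ (A i).powersetCard s, maxC c B = t i ∧
          ∀ B' ∈ (A i).powersetCard s, t i ≤ maxC c B' := by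
        intro i hi
        have hne := (hPne i hi).image (maxC c)
        obtain ⟨hmem, hle⟩ := fmin_spec hne
        rw [Finset.mem_image] at hmem
        obtain ⟨B, hB, hBe⟩ := hmem
        exact ⟨B, hB, hBe, fun B' hB' => hle _ (Finset.mem_image_of_mem _ hB')⟩
      -- pick the part with smallest t
      obtain ⟨i₀, hi₀I, hi₀min⟩ := I.exists_min_image t hIne
      obtain ⟨B₀, hB₀P, hB₀max, _⟩ := htspec i₀ hi₀I
      rw [Finset.mem_powersetCard] at hB₀P
      obtain ⟨hB₀sub, hB₀card⟩ := hB₀P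
      have hB₀ne : B₀.Nonempty := Finset.card_pos.mp (by omega)
      -- the filtered rest
      set A' : Fin 9 → Finset (Fin 3 → ℝ) :=
        fun j => (A j).filter (fun x => ¬ (x c ≤ t i₀)) with hA'
      -- few points below the threshold
      clear_value t A'
      have hK : ∀ j ∈ I, j ≠ i₀ → ((A j).filter (fun x => x c ≤ t i₀)).card < s := by
        intro j hj hjne
        by_contra hcon
        push_neg at hcon
        obtain ⟨Bbad, hBbsub, hBbcard⟩ := Finset.exists_subset_card_eq hcon
        have hBbP : Bbad ∈ (A j).powersetCard s := by
          rw [Finset.mem_powersetCard]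
          exact ⟨hBbsub.trans (Finset.filter_subset _ _), hBbcard⟩
        obtain ⟨_, _, _, hjmin⟩ := htspec j hj
        have h1 : t j ≤ maxC c Bbad := hjmin _ hBbP
        have h0 : t i₀ ≤ t j := hi₀min j hj
        have hBbne : Bbad.Nonempty := Finset.card_pos.mp (by rw [hBbcard]; exact hs)
        obtain ⟨_, hxmem⟩ := maxC_le hBbne
        obtain ⟨x, hxB, hxe⟩ := hxmem
        have hxA : x ∈ (A j).filter (fun x => x c ≤ t i₀) := hBbsub hxB
        rw [Finset.mem_filter] at hxA
        have hxt : x c = t i₀ := le_antisymm hxA.2 (by rw [hxe]; linarith)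
        -- the witness in B₀ attaining t i₀
        obtain ⟨_, hwmem⟩ := maxC_le hB₀ne
        obtain ⟨w, hwB, hwe⟩ := hwmem
        have hwt : w c = t i₀ := by rw [hwe, hB₀max]
        exact hval j hj i₀ hi₀I hjne x hxA.1 w (hB₀sub hwB) (by rw [hxt, hwt])
      -- cardinality for the recursion
      have hcard' : ∀ j ∈ I.erase i₀, s * n ≤ (A' j).card := by
        intro j hj
        rw [Finset.mem_erase] at hj
        have h1 := hK j hj.2 hj.1
        have h2 := hcard j hj.2
        have h3 : ((A j).filter (fun x => x c ≤ t i₀)).card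
            + ((A j).filter (fun x => ¬ (x c ≤ t i₀))).card = (A j).card :=
          Finset.card_filter_add_card_filter_not (fun x : Fin 3 → ℝ => x c ≤ t i₀)
        have h4 : s * (n + 1) = s * n + s := by ring
        simp only [hA']
        revert h1 h2 h3 h4
        generalize ((A j).filter (fun x => x c ≤ t i₀)).card = K
        generalize ((A j).filter (fun x => ¬ (x c ≤ t i₀))).card = F
        generalize (A j).card = M
        intro h1 h2 h3 h4
        omega
      have hval' : ∀ i ∈ I.erase i₀, ∀ j ∈ I.erase i₀, i ≠ j →
          ∀ x ∈ A' i, ∀ y ∈ A' j, x c ≠ y c := by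
        intro i hi j hj hij x hx y hy
        rw [Finset.mem_erase] at hi hj
        rw [hA'] at hx hy
        exact hval i hi.2 j hj.2 hij x (Finset.filter_subset _ _ hx)
          y (Finset.filter_subset _ _ hy)
      obtain ⟨Br, hBr1, hBr2⟩ := ih (I.erase i₀) A'
        (by rw [Finset.card_erase_of_mem hi₀I, hI]; omega) hcard' hval'
      refine ⟨fun j => if j = i₀ then B₀ else Br j, ?_, ?_⟩
      · intro i hi
        by_cases hieq : i = i₀
        · subst hieq; simp [hB₀sub, hB₀card]
        · have hiI : i ∈ I.erase i₀ := Finset.mem_erase.mpr ⟨hieq, hi⟩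
          obtain ⟨hsub, hcardB⟩ := hBr1 i hiI
          simp only [if_neg hieq]
          rw [hA'] at hsub
          exact ⟨hsub.trans (Finset.filter_subset _ _), hcardB⟩
      · intro i hi j hj hij
        have hsepL : ∀ j' ∈ I.erase i₀, CSep c B₀ (Br j') := by
          intro j' hj'
          left
          intro x hx y hy
          have hx' : x c ≤ t i₀ := by
            obtain ⟨hle0, _⟩ := maxC_le hB₀ne
            calc x c ≤ maxC c B₀ := hle0 x hx
              _ = t i₀ := hB₀max
          have hy' : y ∈ A' j' := (hBr1 j' hj').1 hy
          rw [hA'] at hy'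
          rw [Finset.mem_filter] at hy'
          push_neg at hy'
          linarith [hy'.2]
        by_cases hieq : i = i₀
        · have hjne : ¬ j = i₀ := fun h => hij (hieq.trans h.symm)
          have hjI : j ∈ I.erase i₀ := Finset.mem_erase.mpr ⟨hjne, hj⟩
          simp only [if_pos hieq, if_neg hjne]
          subst hieq
          exact hsepL j hjI
        · by_cases hjeq : j = i₀
          · have hiI : i ∈ I.erase i₀ := Finset.mem_erase.mpr ⟨hieq, hi⟩
            simp only [if_neg hieq, if_pos hjeq]
            subst hjeq
            rcases hsepL i hiI with h | h
            · exact Or.inr fun x hx z hz => h z hz x hx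
            · exact Or.inl fun x hx z hz => h z hz x hx
          · simp only [if_neg hieq, if_neg hjeq]
            exact hBr2 i (Finset.mem_erase.mpr ⟨hieq, hi⟩)
              j (Finset.mem_erase.mpr ⟨hjeq, hj⟩) hij

section Core

variable (P : Fin 9 → Fin 2 → (Fin 3 → ℝ))

/-- sign of the separation between block `i` and block `j` in coordinate `c`,
computed from representatives. -/
noncomputable def bsig (i j : Fin 9) (c : Fin 3) : Bool :=
  if P i 0 c < P j 0 c then true else false

/-- internal direction of block `i` in coordinate `c`. -/
noncomputable def beps (i : Fin 9) (c : Fin 3) : Bool :=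
  if P i 0 c < P i 1 c then true else false

/-- sign class of the pair of blocks `(i,j)` (sign vector normalized by coord 0). -/
noncomputable def clsP (i j : Fin 9) : Bool × Bool :=
  (bsig P i j 0 == bsig P i j 1, bsig P i j 0 == bsig P i j 2)

/-- sign class of block `i`'s internal pair. -/
noncomputable def epsP (i : Fin 9) : Bool × Bool :=
  (beps P i 0 == beps P i 1, beps P i 0 == beps P i 2)

/-- `i < j` in the partial order of class `γ`. -/
def RP (γ : Bool × Bool) (i j : Fin 9) : Prop :=
  i ≠ j ∧ clsP P i j = γ ∧ bsig P i j 0 = true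

/-- block `i` is maximal in the partial order of class `γ`. -/
def MP (i : Fin 9) (γ : Bool × Bool) : Prop := ∀ j, ¬ RP P γ i j

noncomputable def h0 (i : Fin 9) : (Bool × Bool) → Bool :=
  fun γ => if MP P i γ then true else false

noncomputable def CC (i : Fin 9) : Finset ((Bool × Bool) → Bool) :=
  {Function.update (h0 P i) (epsP P i) true, Function.update (h0 P i) (epsP P i) false}

end Core

lemma bool_aux1 : ∀ a b a' b' : Bool, ((a == b) = (a' == b')) → a = a' → b = b' := by decide

lemma bool_aux2 : ∀ a b a' b' : Bool, ((a == b) = (a' == b')) → a = !a' → b = !b' := by decide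

lemma core_contradiction (Y : Finset (Fin 3 → ℝ)) (hGen : Generic3 Y)
    (S : Fin 9 → Finset (Fin 3 → ℝ)) (hSY : ∀ i, S i ⊆ Y)
    (P : Fin 9 → Fin 2 → (Fin 3 → ℝ))
    (hPS : ∀ i k, P i k ∈ S i)
    (hPne : ∀ i, P i 0 ≠ P i 1)
    (hsep : ∀ i j, i ≠ j → ∀ c, (∀ k l, P i k c < P j l c) ∨ (∀ k l, P j l c < P i k c))
    (hemp : ∀ i j, i ≠ j → ∀ p ∈ S i, ∀ q ∈ S j, SpansEmptyBox Y p q) : False := by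
  -- basic facts about bsig
  have hPY : ∀ i k, P i k ∈ Y := fun i k => hSY i (hPS i k)
  have bsig_true : ∀ i j, i ≠ j → ∀ c, bsig P i j c = true → ∀ k l, P i k c < P j l c := by
    intro i j hij c hb k l
    rcases hsep i j hij c with h | h
    · exact h k l
    · exfalso
      have := h 0 0
      rw [bsig, if_neg (by push_neg; linarith)] at hb
      exact Bool.false_ne_true hb
  have bsig_false : ∀ i j, i ≠ j → ∀ c, bsig P i j c = false → ∀ k l, P j l c < P i k c := by
    intro i j hij c hb k l
    rcases hsep i j hij c with h | h
    · exfalso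
      have := h 0 0
      rw [bsig, if_pos this] at hb
      exact Bool.noConfusion hb
    · exact h k l
  have bsig_swap : ∀ i j, i ≠ j → ∀ c, bsig P j i c = !(bsig P i j c) := by
    intro i j hij c
    cases hb : bsig P i j c with
    | true =>
        have := bsig_true i j hij c hb 0 0
        simp [bsig, if_neg (by push_neg; linarith : ¬ P j 0 c < P i 0 c)]
    | false =>
        have := bsig_false i j hij c hb 0 0
        simp [bsig, if_pos this]
  have cls_symm : ∀ i j, i ≠ j → clsP P j i = clsP P i j := by
    intro i j hij
    have h0 := bsig_swap i j hij 0
    have h1 := bsig_swap i j hij 1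
    have h2 := bsig_swap i j hij 2
    rw [clsP, clsP, h0, h1, h2]
    cases bsig P i j 0 <;> cases bsig P i j 1 <;> cases bsig P i j 2 <;> rfl
  -- emptiness interface
  have key : ∀ i j, i ≠ j → ∀ z ∈ Y, ∀ p ∈ S i, ∀ q ∈ S j,
      (∀ c, (p c < z c ∧ z c < q c) ∨ (q c < z c ∧ z c < p c)) → False := by
    intro i j hij z hz p hp q hq hbet
    apply hemp i j hij p hp q hq z hz
    intro c
    rcases hbet c with ⟨h1, h2⟩ | ⟨h1, h2⟩
    · exact ⟨lt_of_le_of_lt (min_le_left _ _) h1, lt_of_lt_of_le h2 (le_max_right _ _)⟩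
    · exact ⟨lt_of_le_of_lt (min_le_right _ _) h1, lt_of_lt_of_le h2 (le_max_left _ _)⟩
  -- beps facts
  have beps_true : ∀ i c, beps P i c = true → P i 0 c < P i 1 c := by
    intro i c hb
    by_contra hcon
    rw [beps, if_neg hcon] at hb
    exact Bool.false_ne_true hb
  have beps_false : ∀ i c, beps P i c = false → P i 1 c < P i 0 c := by
    intro i c hb
    have hne : P i 0 c ≠ P i 1 c := hGen _ (hPY i 0) _ (hPY i 1) (hPne i) c
    by_cases hcon : P i 0 c < P i 1 c
    · rw [beps, if_pos hcon] at hb; exact Bool.noConfusion hb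
    · push_neg at hcon
      exact lt_of_le_of_ne hcon (Ne.symm hne)
  -- (H1): the class of a cross pair never equals the internal class
  have H1 : ∀ i j, i ≠ j → clsP P i j ≠ epsP P i := by
    intro i j hij heq
    rw [clsP, epsP, Prod.mk.injEq] at heq
    obtain ⟨he1, he2⟩ := heq
    by_cases hb0 : bsig P i j 0 = beps P i 0
    · have hall : ∀ c, bsig P i j c = beps P i c := by
        intro c
        fin_cases c
        · exact hb0
        · exact bool_aux1 _ _ _ _ he1 hb0
        · exact bool_aux1 _ _ _ _ he2 hb0
      apply key i j hij (P i 1) (hPY i 1) (P i 0) (hPS i 0) (P j 0) (hPS j 0)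
      intro c
      cases hbc : beps P i c with
      | true =>
          left
          exact ⟨beps_true i c hbc, bsig_true i j hij c (by rw [hall c, hbc]) 1 0⟩
      | false =>
          right
          exact ⟨bsig_false i j hij c (by rw [hall c, hbc]) 1 0, beps_false i c hbc⟩
    · have hb0' : bsig P i j 0 = !(beps P i 0) := by
        cases h : bsig P i j 0 <;> cases h' : beps P i 0 <;> simp_all
      have hall : ∀ c, bsig P i j c = !(beps P i c) := by
        intro c
        fin_cases c
        · exact hb0'
        · exact bool_aux2 _ _ _ _ he1 hb0'
        · exact bool_aux2 _ _ _ _ he2 hb0'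
      apply key i j hij (P i 0) (hPY i 0) (P i 1) (hPS i 1) (P j 0) (hPS j 0)
      intro c
      cases hbc : beps P i c with
      | true =>
          right
          exact ⟨bsig_false i j hij c (by rw [hall c, hbc]; rfl) 0 0,
            beps_true i c hbc⟩
      | false =>
          left
          exact ⟨beps_false i c hbc, bsig_true i j hij c (by rw [hall c, hbc]; rfl) 0 0⟩
  -- (H2): no two-step chain in a single class
  have H2 : ∀ γ i l j, RP P γ i l → RP P γ l j → False := by
    intro γ i l j ⟨hil, hcil, hbil⟩ ⟨hlj, hclj, hblj⟩
    by_cases hij : i = j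
    · subst hij
      have h1 := bsig_true i l hil 0 hbil 0 0
      have h2 := bsig_true l i hlj 0 hblj 0 0
      linarith
    · have hcc : clsP P i l = clsP P l j := by rw [hcil, hclj]
      rw [clsP, clsP, Prod.mk.injEq] at hcc
      obtain ⟨hc1, hc2⟩ := hcc
      have hb0 : bsig P i l 0 = bsig P l j 0 := by rw [hbil, hblj]
      have hall : ∀ c, bsig P i l c = bsig P l j c := by
        intro c
        fin_cases c
        · exact hb0
        · exact bool_aux1 _ _ _ _ hc1 hb0
        · exact bool_aux1 _ _ _ _ hc2 hb0
      apply key i j hij (P l 0) (hPY l 0) (P i 0) (hPS i 0) (P j 0) (hPS j 0)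
      intro c
      cases hbc : bsig P i l c with
      | true =>
          left
          exact ⟨bsig_true i l hil c hbc 0 0,
            bsig_true l j hlj c (by rw [← hall c, hbc]) 0 0⟩
      | false =>
          right
          exact ⟨bsig_false l j hlj c (by rw [← hall c, hbc]) 0 0,
            bsig_false i l hil c hbc 0 0⟩
  -- the two elements of CC i differ at epsP i
  have hCCcard : ∀ i, (CC P i).card = 2 := by
    intro i
    rw [CC]
    rw [Finset.card_insert_of_notMem, Finset.card_singleton]
    rw [Finset.mem_singleton]
    intro hcon
    have := congrFun hcon (epsP P i)
    rw [Function.update_self, Function.update_self] at this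
    exact Bool.noConfusion this
  -- members of CC i agree with h0 off epsP i
  have hCCval : ∀ i (h : (Bool × Bool) → Bool), h ∈ CC P i → ∀ γ, γ ≠ epsP P i →
      h γ = h0 P i γ := by
    intro i h hh γ hγ
    rw [CC, Finset.mem_insert, Finset.mem_singleton] at hh
    rcases hh with rfl | rfl <;> exact Function.update_of_ne hγ _ _
  -- disjointness
  have hdisj : ∀ i j : Fin 9, i ≠ j → Disjoint (CC P i) (CC P j) := by
    intro i j hij
    rw [Finset.disjoint_left]
    intro h hhi hhj
    set γ := clsP P i j with hγ
    have hγi : γ ≠ epsP P i := H1 i j hij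
    have hγj : γ ≠ epsP P j := by
      rw [hγ, ← cls_symm i j hij]
      exact H1 j i (Ne.symm hij)
    have hvi : h γ = h0 P i γ := hCCval i h hhi γ hγi
    have hvj : h γ = h0 P j γ := hCCval j h hhj γ hγj
    cases hb : bsig P i j 0 with
    | true =>
        have hR : RP P γ i j := ⟨hij, hγ.symm, hb⟩
        have hMi : ¬ MP P i γ := fun hM => hM j hR
        have hMj : MP P j γ := fun k hk => H2 γ i j k hR hk
        rw [h0, if_neg hMi] at hvi
        rw [h0, if_pos hMj] at hvj
        rw [hvi] at hvj
        exact Bool.false_ne_true hvj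
    | false =>
        have hb' : bsig P j i 0 = true := by rw [bsig_swap i j hij 0, hb]; rfl
        have hR : RP P γ j i := ⟨Ne.symm hij, by rw [cls_symm i j hij, hγ], hb'⟩
        have hMj : ¬ MP P j γ := fun hM => hM i hR
        have hMi : MP P i γ := fun k hk => H2 γ j i k hR hk
        rw [h0, if_pos hMi] at hvi
        rw [h0, if_neg hMj] at hvj
        rw [hvj] at hvi
        exact Bool.noConfusion hvi
  -- the counting
  have hcount : ((Finset.univ : Finset (Fin 9)).biUnion (CC P)).card
      = ∑ i : Fin 9, (CC P i).card :=
    Finset.card_biUnion (fun i _ j _ hij => hdisj i j hij)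
  have hsum : ∑ i : Fin 9, (CC P i).card = 18 := by
    simp [hCCcard]
  have hle : ((Finset.univ : Finset (Fin 9)).biUnion (CC P)).card
      ≤ Fintype.card ((Bool × Bool) → Bool) := Finset.card_le_univ _
  have hfc : Fintype.card ((Bool × Bool) → Bool) = 16 := by
    simp [Fintype.card_fun]
  omega

theorem complete_9partite_forbidden :
    ∃ n₀ : ℕ, ∀ n : ℕ, n₀ ≤ n →
      ∀ Y : Finset (Fin 3 → ℝ), Generic3 Y →
        ∀ S : Fin 9 → Finset (Fin 3 → ℝ),
          (∀ i, S i ⊆ Y) → (∀ i, (S i).card = n) →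
          (∀ i j, i ≠ j → Disjoint (S i) (S j)) →
          ∃ i j, i ≠ j ∧ ∃ p ∈ S i, ∃ q ∈ S j, ¬ SpansEmptyBox Y p q := by
  refine ⟨1458, ?_⟩
  intro n hn Y hGen S hSY hcard hdisj
  by_contra hcon
  push_neg at hcon
  have huniv : (Finset.univ : Finset (Fin 9)).card = 9 := by simp
  have hval : ∀ (A : Fin 9 → Finset (Fin 3 → ℝ)), (∀ i, A i ⊆ S i) →
      ∀ (c : Fin 3), ∀ i ∈ (Finset.univ : Finset (Fin 9)), ∀ j ∈ (Finset.univ : Finset (Fin 9)),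
      i ≠ j → ∀ x ∈ A i, ∀ y ∈ A j, x c ≠ y c := by
    intro A hA c i _ j _ hij x hx y hy
    have hx' := hA i hx
    have hy' := hA j hy
    have hxy : x ≠ y := by
      intro he
      subst he
      exact (Finset.disjoint_left.mp (hdisj i j hij) hx') hy'
    exact hGen x (hSY i hx') y (hSY j hy') hxy c
  -- separate in coordinate 0
  obtain ⟨B1, hB1, hsep0⟩ := sepc 0 162 (by norm_num) 9 Finset.univ S huniv
    (fun i _ => by rw [hcard i]; omega)
    (hval S (fun i => subset_rfl) 0)
  have hB1S : ∀ i, B1 i ⊆ S i := fun i => (hB1 i (Finset.mem_univ i)).1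
  -- separate in coordinate 1
  obtain ⟨B2, hB2, hsep1⟩ := sepc 1 18 (by norm_num) 9 Finset.univ B1 huniv
    (fun i _ => by rw [(hB1 i (Finset.mem_univ i)).2])
    (hval B1 hB1S 1)
  have hB2S : ∀ i, B2 i ⊆ S i := fun i => ((hB2 i (Finset.mem_univ i)).1).trans (hB1S i)
  -- separate in coordinate 2
  obtain ⟨B3, hB3, hsep2⟩ := sepc 2 2 (by norm_num) 9 Finset.univ B2 huniv
    (fun i _ => by rw [(hB2 i (Finset.mem_univ i)).2])
    (hval B2 hB2S 2)
  have hB3S : ∀ i, B3 i ⊆ S i := fun i => ((hB3 i (Finset.mem_univ i)).1).trans (hB2S i)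
  -- extract the two points of each block
  have hex : ∀ i, ∃ ab : (Fin 3 → ℝ) × (Fin 3 → ℝ), ab.1 ≠ ab.2 ∧ B3 i = {ab.1, ab.2} := by
    intro i
    obtain ⟨x, y, hxy, hB⟩ := Finset.card_eq_two.mp (hB3 i (Finset.mem_univ i)).2
    exact ⟨(x, y), hxy, hB⟩
  choose ab hne hBeq using hex
  set P : Fin 9 → Fin 2 → (Fin 3 → ℝ) := fun i k => if k = 0 then (ab i).1 else (ab i).2
    with hPdef
  have hPD : ∀ i (k : Fin 2), P i k ∈ B3 i := by
    intro i k
    rw [hBeq i, hPdef]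
    by_cases hk : k = 0
    · simp [hk]
    · simp [hk]
  have hPS : ∀ i (k : Fin 2), P i k ∈ S i := fun i k => hB3S i (hPD i k)
  have hPne : ∀ i, P i 0 ≠ P i 1 := by
    intro i
    rw [hPdef]
    simpa using hne i
  have hsepP : ∀ i j, i ≠ j → ∀ c : Fin 3,
      (∀ k l : Fin 2, P i k c < P j l c) ∨ (∀ k l : Fin 2, P j l c < P i k c) := by
    intro i j hij c
    have hcs : CSep c (B3 i) (B3 j) := by
      fin_cases c
      · exact (hsep0 i (Finset.mem_univ i) j (Finset.mem_univ j) hij).mono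
          (((hB3 i (Finset.mem_univ i)).1).trans (hB2 i (Finset.mem_univ i)).1)
          (((hB3 j (Finset.mem_univ j)).1).trans (hB2 j (Finset.mem_univ j)).1)
      · exact (hsep1 i (Finset.mem_univ i) j (Finset.mem_univ j) hij).mono
          (hB3 i (Finset.mem_univ i)).1 (hB3 j (Finset.mem_univ j)).1
      · exact hsep2 i (Finset.mem_univ i) j (Finset.mem_univ j) hij
    rcases hcs with h | h
    · exact Or.inl fun k l => h _ (hPD i k) _ (hPD j l)
    · exact Or.inr fun k l => h _ (hPD i k) _ (hPD j l)
  exact core_contradiction Y hGen S hSY P hPS hPne hsepP hcon
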